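/- For a quantum poset (𝒳,R), a quantum set 𝒲, and functions K, K' : 𝒲 → 𝒳, if R∘K = R∘K' then K = K'. (Limits of increasing sequences, when they exist, are unique.) -/
import Mathlib


open Matrix

/-- A quantum relation between quantum sets: atom index types `ι`, `κ` with
dimension functions `a`, `b`; an entrywise choice of operator subspaces,
operators `L(X,Y)` represented as matrices. -/
abbrev QRel (ι κ : Type) (a : ι → ℕ) (b : κ → ℕ) : Type :=
  ∀ (X : ι) (Y : κ), Submodule ℂ (Matrix (Fin (b Y)) (Fin (a X)) ℂ)

/-- Composition of quantum relations: entrywise span of products over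
intermediate atoms. -/
noncomputable def qComp {ι κ μ : Type} {a : ι → ℕ} {b : κ → ℕ} {c : μ → ℕ}
    (S : QRel κ μ b c) (R : QRel ι κ a b) : QRel ι μ a c :=
  fun X Z => Submodule.span ℂ
    {t | ∃ (Y : κ) (r : Matrix (Fin (b Y)) (Fin (a X)) ℂ)
        (s : Matrix (Fin (c Z)) (Fin (b Y)) ℂ),
        r ∈ R X Y ∧ s ∈ S Y Z ∧ t = s * r}

/-- Adjoint of a quantum relation: entrywise conjugate transpose. -/
noncomputable def qAdj {ι κ : Type} {a : ι → ℕ} {b : κ → ℕ} (R : QRel ι κ a b) : QRel κ ι b a :=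
  fun Y X =>
  { carrier := {g | gᴴ ∈ R X Y}
    add_mem' := fun hx hy => by
      simpa [Matrix.conjTranspose_add] using (R X Y).add_mem hx hy
    zero_mem' := by simpa using (R X Y).zero_mem
    smul_mem' := fun c x hx => by
      simpa [Matrix.conjTranspose_smul] using (R X Y).smul_mem (star c) hx }

/-- The identity quantum relation: `ℂ·1` on the diagonal, `0` elsewhere. -/
noncomputable def qId (ι : Type) (a : ι → ℕ) : QRel ι ι a a :=
  fun X X' => Submodule.span ℂ
    {m | X = X' ∧ ∀ i j, m i j = if (i : ℕ) = (j : ℕ) then 1 else 0}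

/-- A quantum relation is a function when `F∘F† ≤ I` and `F†∘F ≥ I`. -/
def qIsFunc {ι κ : Type} {a : ι → ℕ} {b : κ → ℕ} (F : QRel ι κ a b) : Prop :=
  qComp F (qAdj F) ≤ qId κ b ∧ qId ι a ≤ qComp (qAdj F) F

/-- A quantum partial order: reflexive, transitive, antisymmetric. -/
def qIsOrder {ι : Type} {a : ι → ℕ} (R : QRel ι ι a a) : Prop :=
  qId ι a ≤ R ∧ qComp R R ≤ R ∧ R ⊓ qAdj R ≤ qId ι a

/-- The order on functions into a quantum poset `(𝒳,R)`: `F ⊑ G` iff `G ≤ R∘F`. -/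
def qFunLE {ι κ : Type} {a : ι → ℕ} {b : κ → ℕ} (R : QRel κ κ b b)
    (F G : QRel ι κ a b) : Prop :=
  G ≤ qComp R F

section Aux

variable {ι κ μ ν : Type} {a : ι → ℕ} {b : κ → ℕ} {c : μ → ℕ} {d : ν → ℕ}

lemma mul_mem_qComp {S : QRel κ μ b c} {R : QRel ι κ a b} {X : ι} {Y : κ} {Z : μ}
    {r : Matrix (Fin (b Y)) (Fin (a X)) ℂ} {s : Matrix (Fin (c Z)) (Fin (b Y)) ℂ}
    (hr : r ∈ R X Y) (hs : s ∈ S Y Z) : s * r ∈ qComp S R X Z :=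
  Submodule.subset_span ⟨Y, r, s, hr, hs, rfl⟩

lemma qComp_le {S : QRel κ μ b c} {R : QRel ι κ a b} {T : QRel ι μ a c}
    (h : ∀ (X : ι) (Y : κ) (Z : μ) (r : Matrix (Fin (b Y)) (Fin (a X)) ℂ)
      (s : Matrix (Fin (c Z)) (Fin (b Y)) ℂ),
      r ∈ R X Y → s ∈ S Y Z → s * r ∈ T X Z) :
    qComp S R ≤ T := by
  intro X Z
  apply Submodule.span_le.2
  rintro t ⟨Y, r, s, hr, hs, rfl⟩
  exact h X Y Z r s hr hs

lemma qComp_mono {S S' : QRel κ μ b c} {R R' : QRel ι κ a b}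
    (hS : S ≤ S') (hR : R ≤ R') : qComp S R ≤ qComp S' R' :=
  qComp_le fun X Y Z r s hr hs => mul_mem_qComp (hR X Y hr) (hS Y Z hs)

lemma qComp_assoc (T : QRel μ ν c d) (S : QRel κ μ b c) (R : QRel ι κ a b) :
    qComp T (qComp S R) = qComp (qComp T S) R := by
  apply le_antisymm
  · apply qComp_le
    intro X Z W u t hu ht
    induction hu using Submodule.span_induction with
    | mem u hu =>
        obtain ⟨Y, r, s, hr, hs, rfl⟩ := hu
        rw [← Matrix.mul_assoc]
        exact mul_mem_qComp hr (mul_mem_qComp hs ht)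
    | zero => rw [Matrix.mul_zero]; exact zero_mem _
    | add u v _ _ hu hv => rw [Matrix.mul_add]; exact add_mem hu hv
    | smul e u _ hu => rw [Matrix.mul_smul]; exact Submodule.smul_mem _ _ hu
  · apply qComp_le
    intro X Y W r v hr hv
    induction hv using Submodule.span_induction with
    | mem v hv =>
        obtain ⟨Z, s, t, hs, ht, rfl⟩ := hv
        rw [Matrix.mul_assoc]
        exact mul_mem_qComp (mul_mem_qComp hr hs) ht
    | zero => rw [Matrix.zero_mul]; exact zero_mem _
    | add u v _ _ hu hv => rw [Matrix.add_mul]; exact add_mem hu hv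
    | smul e v _ hv => rw [Matrix.smul_mul]; exact Submodule.smul_mem _ _ hv

lemma one_mem_qId (X : ι) : (1 : Matrix (Fin (a X)) (Fin (a X)) ℂ) ∈ qId ι a X X :=
  Submodule.subset_span ⟨rfl, fun i j => by simp [Matrix.one_apply, Fin.val_eq_val]⟩

lemma mem_qId_self {X : ι} {s : Matrix (Fin (a X)) (Fin (a X)) ℂ}
    (h : s ∈ qId ι a X X) : ∃ e : ℂ, s = e • 1 := by
  have hset : {m : Matrix (Fin (a X)) (Fin (a X)) ℂ |
      X = X ∧ ∀ i j, m i j = if (i : ℕ) = (j : ℕ) then 1 else 0} = {1} := by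
    ext m
    constructor
    · rintro ⟨-, hm⟩
      refine Set.mem_singleton_iff.2 ?_
      ext i j
      rw [hm, Matrix.one_apply]
      simp [Fin.val_eq_val]
    · intro hm
      rw [Set.mem_singleton_iff] at hm
      subst hm
      exact ⟨rfl, fun i j => by simp [Matrix.one_apply, Fin.val_eq_val]⟩
  rw [qId, hset] at h
  obtain ⟨e, he⟩ := Submodule.mem_span_singleton.1 h
  exact ⟨e, he.symm⟩

lemma qId_eq_bot {X Y : ι} (h : X ≠ Y) : qId ι a X Y = ⊥ := by
  have hset : {m : Matrix (Fin (a Y)) (Fin (a X)) ℂ |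
      X = Y ∧ ∀ i j, m i j = if (i : ℕ) = (j : ℕ) then 1 else 0} = ∅ := by
    ext m; simp [h]
  rw [qId, hset, Submodule.span_empty]

lemma qComp_qId_left (S : QRel ι κ a b) : qComp (qId κ b) S = S := by
  apply le_antisymm
  · apply qComp_le
    intro X Y Z r s hr hs
    by_cases hYZ : Y = Z
    · subst hYZ
      obtain ⟨e, rfl⟩ := mem_qId_self hs
      rw [Matrix.smul_mul, Matrix.one_mul]
      exact Submodule.smul_mem _ _ hr
    · rw [qId_eq_bot hYZ, Submodule.mem_bot] at hs
      rw [hs, Matrix.zero_mul]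
      exact zero_mem _
  · intro X Z t ht
    simpa using mul_mem_qComp ht (one_mem_qId Z)

lemma qComp_qId_right (S : QRel ι κ a b) : qComp S (qId ι a) = S := by
  apply le_antisymm
  · apply qComp_le
    intro X Y Z r s hr hs
    by_cases hXY : X = Y
    · subst hXY
      obtain ⟨e, rfl⟩ := mem_qId_self hr
      rw [Matrix.mul_smul, Matrix.mul_one]
      exact Submodule.smul_mem _ _ hs
    · rw [qId_eq_bot hXY, Submodule.mem_bot] at hr
      rw [hr, Matrix.mul_zero]
      exact zero_mem _
  · intro X Z t ht
    simpa using mul_mem_qComp (one_mem_qId X) ht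

lemma qAdj_mono {R S : QRel ι κ a b} (h : R ≤ S) : qAdj R ≤ qAdj S :=
  fun Y X _ hg => h X Y hg

lemma qAdj_qAdj (R : QRel ι κ a b) : qAdj (qAdj R) = R := by
  funext X Y
  ext g
  show gᴴᴴ ∈ R X Y ↔ g ∈ R X Y
  rw [Matrix.conjTranspose_conjTranspose]

lemma conjTranspose_mem_span_image {m n : Type*} (s : Set (Matrix m n ℂ))
    {x : Matrix m n ℂ} (hx : x ∈ Submodule.span ℂ s) :
    xᴴ ∈ Submodule.span ℂ (Matrix.conjTranspose '' s) := by
  induction hx using Submodule.span_induction with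
  | mem x hx => exact Submodule.subset_span ⟨x, hx, rfl⟩
  | zero => simpa using Submodule.zero_mem _
  | add x y _ _ hx hy => rw [Matrix.conjTranspose_add]; exact add_mem hx hy
  | smul e x _ hx => rw [Matrix.conjTranspose_smul]; exact Submodule.smul_mem _ _ hx

lemma qAdj_qComp (S : QRel κ μ b c) (R : QRel ι κ a b) :
    qAdj (qComp S R) = qComp (qAdj R) (qAdj S) := by
  apply le_antisymm
  · intro Z X g hg
    have hg' : gᴴ ∈ qComp S R X Z := hg
    have := conjTranspose_mem_span_image _ hg'
    rw [Matrix.conjTranspose_conjTranspose] at this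
    refine Submodule.span_le.2 ?_ this
    rintro t ⟨x, ⟨Y, r, s, hr, hs, rfl⟩, rfl⟩
    rw [Matrix.conjTranspose_mul]
    refine mul_mem_qComp (S := qAdj R) (R := qAdj S) ?_ ?_
    · show sᴴᴴ ∈ S Y Z
      rwa [Matrix.conjTranspose_conjTranspose]
    · show rᴴᴴ ∈ R X Y
      rwa [Matrix.conjTranspose_conjTranspose]
  · apply qComp_le
    intro Z Y X r s hr hs
    show (s * r)ᴴ ∈ qComp S R X Z
    rw [Matrix.conjTranspose_mul]
    exact mul_mem_qComp hs hr

lemma qFun_le_of (R : QRel κ κ b b) (hR : qIsOrder R)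
    (K K' : QRel ι κ a b) (hK : qIsFunc K) (hK' : qIsFunc K')
    (h : qComp R K = qComp R K') : K' ≤ K := by
  have h1 : K' ≤ qComp R K := by
    calc K' = qComp (qId κ b) K' := (qComp_qId_left K').symm
      _ ≤ qComp R K' := qComp_mono hR.1 le_rfl
      _ = qComp R K := h.symm
  have h2 : K ≤ qComp R K' := by
    calc K = qComp (qId κ b) K := (qComp_qId_left K).symm
      _ ≤ qComp R K := qComp_mono hR.1 le_rfl
      _ = qComp R K' := h
  have hKK : qComp K' (qAdj K) ≤ R := by
    calc qComp K' (qAdj K) ≤ qComp (qComp R K) (qAdj K) := qComp_mono h1 le_rfl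
      _ = qComp R (qComp K (qAdj K)) := (qComp_assoc R K (qAdj K)).symm
      _ ≤ qComp R (qId κ b) := qComp_mono le_rfl hK.1
      _ = R := qComp_qId_right R
  have hK'K : qComp K (qAdj K') ≤ R := by
    calc qComp K (qAdj K') ≤ qComp (qComp R K') (qAdj K') := qComp_mono h2 le_rfl
      _ = qComp R (qComp K' (qAdj K')) := (qComp_assoc R K' (qAdj K')).symm
      _ ≤ qComp R (qId κ b) := qComp_mono le_rfl hK'.1
      _ = R := qComp_qId_right R
  have hadj : qComp K' (qAdj K) ≤ qAdj R := by
    have := qAdj_mono hK'K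
    rwa [qAdj_qComp, qAdj_qAdj] at this
  have hI : qComp K' (qAdj K) ≤ qId κ b := le_trans (le_inf hKK hadj) hR.2.2
  calc K' = qComp K' (qId ι a) := (qComp_qId_right K').symm
    _ ≤ qComp K' (qComp (qAdj K) K) := qComp_mono le_rfl hK.2
    _ = qComp (qComp K' (qAdj K)) K := qComp_assoc K' (qAdj K) K
    _ ≤ qComp (qId κ b) K := qComp_mono hI le_rfl
    _ = K := qComp_qId_left K

end Aux

/-- Limits are unique: for functions `K, K'` into a quantum poset `(𝒳,R)`,
if `R∘K = R∘K'` then `K = K'`. -/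
theorem qLimit_unique {ι κ : Type} {a : ι → ℕ} {b : κ → ℕ}
    (R : QRel κ κ b b) (hR : qIsOrder R)
    (K K' : QRel ι κ a b) (hK : qIsFunc K) (hK' : qIsFunc K')
    (h : qComp R K = qComp R K') : K = K' :=
  le_antisymm (qFun_le_of R hR K' K hK' hK h.symm) (qFun_le_of R hR K K' hK hK' h)
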